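/- arXiv:2007.09086 — 4 statements merged into one kernel-verified Lean document; each statement's English description precedes it below -/
import Mathlib

section
/- If k ≥ 3, m is in k-normal form A_a(k,0), and 0 < l < k, then (A_a(k,·))^l(0) is in k-normal form (i.e. A_a(k,0) ≤ (A_a(k,·))^l(0) < A_{a+1}(k,0)). -/
/-- The parametrized Ackermann function: `A a k b` is `A_a(k,b)`. -/
def A : ℕ → ℕ → ℕ → ℕ
  | 0, _, b => b + 1
  | a+1, k, 0 => (fun x => A a k x)^[k] 0
  | a+1, k, b+1 => (fun x => A a k x)^[k] (A (a+1) k b)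
  termination_by a _ b => (a, b)

/-- `m = A_a(k,b) + l` is the `k`-normal form of `m`: `a` is maximal with
`A_a(k,0) ≤ m` and `b` is maximal with `A_a(k,b) ≤ m`. -/
def IsNF (k m a b l : ℕ) : Prop :=
  m = A a k b + l ∧ A a k 0 ≤ m ∧
  (∀ a', A a' k 0 ≤ m → a' ≤ a) ∧
  (∀ b', A a k b' ≤ m → b' ≤ b)

/-- The graph of the hereditary base change operation `m ↦ m[k←k+1]`. -/
inductive BC (k : ℕ) : ℕ → ℕ → Prop
  | zero : BC k 0 0
  | step {a b l a' b'} :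
      IsNF k (A a k b + l) a b l → BC k a a' → BC k b b' →
      BC k (A a k b + l) (A a' (k+1) b' + l)

lemma A_self_lt (k : ℕ) (hk : 1 ≤ k) : ∀ a b, b < A a k b := by
  intro a
  induction a with
  | zero => intro b; simp [A]
  | succ a ih =>
    have gen : ∀ (f : ℕ → ℕ), (∀ x, x < f x) → ∀ n x, x < f^[n+1] x := by
      intro f hf n
      induction n with
      | zero => simpa using hf
      | succ n ihn =>
        intro x
        calc x < f^[n+1] x := ihn x
          _ < f (f^[n+1] x) := hf _
          _ = f^[n+1+1] x := (Function.iterate_succ_apply' _ _ _).symm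
    have hstep : ∀ x, x < (fun x => A a k x)^[k] x := by
      intro x
      have := gen _ ih (k - 1) x
      rwa [Nat.sub_add_cancel hk] at this
    intro b
    induction b with
    | zero => simpa [A] using hstep 0
    | succ b ihb =>
      calc b + 1 ≤ A (a+1) k b := ihb
        _ < (fun x => A a k x)^[k] (A (a+1) k b) := hstep _
        _ = A (a+1) k (b+1) := by rw [A]

/-- If `m = A_a(k,0)` is in `k`-normal form and `0 < l < k`, then the `l`-fold
iterate `(A_a(k,·))^l(0)` is in `k`-normal form, i.e.
`A_a(k,0) ≤ (A_a(k,·))^l(0) < A_{a+1}(k,0)`. -/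
theorem iterate_normal_form (k a l : ℕ) (hk : 3 ≤ k)
    (h : IsNF k (A a k 0) a 0 0) (hl : 0 < l) (hlk : l < k) :
    A a k 0 ≤ (fun x => A a k x)^[l] 0 ∧ (fun x => A a k x)^[l] 0 < A (a + 1) k 0 := by
  have hk1 : 1 ≤ k := by omega
  have hself := A_self_lt k hk1 a
  have hmono : StrictMono (fun n => (fun x => A a k x)^[n] 0) := by
    apply strictMono_nat_of_lt_succ
    intro n
    rw [Function.iterate_succ_apply']
    exact hself _
  constructor
  · have : (fun x => A a k x)^[1] 0 ≤ (fun x => A a k x)^[l] 0 := hmono.monotone hl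
    simpa using this
  · have : (fun x => A a k x)^[l] 0 < (fun x => A a k x)^[k] 0 := hmono hlk
    simpa [A] using this
end

section
/- For every k ≥ 3 and every m, m ≤ m[k←k+1], where m[k←k+1] is the base change of m from base k to base k+1 acting hereditarily on both the index argument and the second argument of the Ackermann function. -/
open Function

section

variable {k : ℕ}

@[simp]
lemma A_zero (b : ℕ) : A 0 k b = b + 1 := by rw [A]

lemma A_succ_zero (a : ℕ) : A (a + 1) k 0 = (A a k)^[k] 0 := by rw [A]

lemma A_succ_succ (a b : ℕ) : A (a + 1) k (b + 1) = (A a k)^[k] (A (a + 1) k b) := by rw [A]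

lemma lt_A (hk : 0 < k) (a b : ℕ) : b < A a k b := by
  induction a generalizing b with
  | zero => simp
  | succ a ih =>
    obtain ⟨j, rfl⟩ : ∃ j, k = j + 1 := ⟨k - 1, by omega⟩
    have lt_iterate : ∀ x, x < (A a (j + 1))^[j + 1] x := fun x => by
      rw [iterate_succ_apply']
      exact (id_le_iterate_of_id_le (fun y => (ih y).le) j x).trans_lt (ih _)
    induction b with
    | zero => rw [A_succ_zero]; exact lt_iterate 0
    | succ b ihb => rw [A_succ_succ]; exact (Nat.succ_le_of_lt ihb).trans_lt (lt_iterate _)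

lemma monotone_A (hk : 0 < k) (a : ℕ) : Monotone (A a k) := by
  refine monotone_nat_of_le_succ fun b => ?_
  cases a with
  | zero => simp
  | succ a =>
    rw [A_succ_succ]
    exact id_le_iterate_of_id_le (fun y => (lt_A hk a y).le) k _

lemma A_le_A_succ_level (hk : 0 < k) (a : ℕ) : A a k ≤ A (a + 1) k := by
  obtain ⟨j, rfl⟩ : ∃ j, k = j + 1 := ⟨k - 1, by omega⟩
  have id_le : id ≤ A a (j + 1) := fun y => (lt_A hk a y).le
  intro b
  cases b with
  | zero =>
    rw [A_succ_zero, iterate_succ_apply']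
    exact monotone_A hk a (Nat.zero_le _)
  | succ b =>
    rw [A_succ_succ, iterate_succ_apply']
    exact monotone_A hk a ((lt_A hk (a + 1) b).trans_le (id_le_iterate_of_id_le id_le j _))

lemma monotone_A_level (hk : 0 < k) : Monotone fun a => A a k :=
  monotone_nat_of_le_succ (A_le_A_succ_level hk)

lemma A_le_A_succ_base (a : ℕ) : A a k ≤ A a (k + 1) := by
  induction a with
  | zero => intro b; simp
  | succ a ih =>
    have hg : Monotone (A a (k + 1)) := monotone_A k.succ_pos a
    have iterate_le : ∀ x y, x ≤ y → (A a k)^[k] x ≤ (A a (k + 1))^[k + 1] y := fun x y hxy =>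
      calc (A a k)^[k] x
          _ ≤ (A a (k + 1))^[k] x := hg.le_iterate_of_le ih k x
          _ ≤ (A a (k + 1))^[k] y := hg.iterate k hxy
          _ ≤ (A a (k + 1))^[k + 1] y := by
            rw [iterate_succ_apply']; exact (lt_A k.succ_pos a _).le
    intro b
    induction b with
    | zero => rw [A_succ_zero, A_succ_zero]; exact iterate_le _ _ le_rfl
    | succ b ihb => rw [A_succ_succ, A_succ_succ]; exact iterate_le _ _ ihb

lemma monotone_A_base (a : ℕ) : Monotone fun k => A a k :=
  monotone_nat_of_le_succ fun _ => A_le_A_succ_base a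

lemma A_le_A {a a' k' b b' : ℕ} (hk : 0 < k) (hkk' : k ≤ k') (ha : a ≤ a') (hb : b ≤ b') :
    A a k b ≤ A a' k' b' :=
  calc A a k b
      _ ≤ A a' k b := monotone_A_level hk ha b
      _ ≤ A a' k' b := monotone_A_base a' hkk' b
      _ ≤ A a' k' b' := monotone_A (hk.trans_le hkk') a' hb

end

/-- For every `k ≥ 3`, `m ≤ m[k←k+1]`. -/
theorem base_change_le (k m m' : ℕ) (hk : 3 ≤ k) (h : BC k m m') : m ≤ m' := by
  induction h with
  | zero => rfl
  | step _ _ _ iha ihb => exact Nat.add_le_add_right (A_le_A (by omega) k.le_succ iha ihb) _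
end

section
/- Define ψ_k : ℕ → ordinals below ε₀ by ψ_k(0)=0 and, for m with k-normal form A_a(k,b)+l: ψ_k(m) = b+1 if a=0; ψ_k(m) = ω·(1+ψ_k(b))+l if a=1; ψ_k(m) = ω^(ω+(-2+ψ_k(a))) + ω·ψ_k(b) + l if a ≥ 2 (where -2+α denotes truncated subtraction for finite α and α otherwise). Then for all k ≥ 3 and all m, ψ_{k+1}(m[k←k+1]) = ψ_k(m). -/
open Ordinal in
/-- `-c + o`: truncated subtraction on finite ordinals, identity on infinite ones. -/
noncomputable def msub (c : ℕ) (o : Ordinal) : Ordinal :=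
  if o < Ordinal.omega0 then o - c else o

open Ordinal in
/-- The graph of the map `ψ_k` assigning ordinals below `ε₀` to natural numbers,
defined via `k`-normal forms. -/
inductive Psi (k : ℕ) : ℕ → Ordinal → Prop
  | zero : Psi k 0 0
  | base {b l : ℕ} : IsNF k (A 0 k b + l) 0 b l →
      Psi k (A 0 k b + l) ((b : Ordinal) + 1)
  | one {b l : ℕ} {ob : Ordinal} : IsNF k (A 1 k b + l) 1 b l → Psi k b ob →
      Psi k (A 1 k b + l) (omega0 * (1 + ob) + (l : Ordinal))
  | ge {a b l : ℕ} {oa ob : Ordinal} : 2 ≤ a → IsNF k (A a k b + l) a b l →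
      Psi k a oa → Psi k b ob →
      Psi k (A a k b + l) (omega0 ^ (omega0 + msub 2 oa) + omega0 * ob + (l : Ordinal))


lemma A0 (k b : ℕ) : A 0 k b = b + 1 := by rw [A]
lemma AS0 (a k : ℕ) : A (a+1) k 0 = (A a k)^[k] 0 := by rw [A]
lemma ASS (a k b : ℕ) : A (a+1) k (b+1) = (A a k)^[k] (A (a+1) k b) := by rw [A]

section Iter
variable {f g : ℕ → ℕ}

lemma iterExp (hf : ∀ x, x + 1 ≤ f x) : ∀ (n x : ℕ), x + n ≤ f^[n] x
  | 0, _ => le_refl _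
  | n+1, x => by
    rw [Function.iterate_succ_apply']
    have h1 := iterExp hf n x
    have h2 := hf (f^[n] x)
    omega

lemma iterGeSelf (hf : ∀ x, x + 1 ≤ f x) (n x : ℕ) : x ≤ f^[n] x := by
  have := iterExp hf n x; omega

lemma iterCountMono (hf : ∀ x, x + 1 ≤ f x) {i j : ℕ} (h : i ≤ j) (x : ℕ) :
    f^[i] x ≤ f^[j] x := by
  obtain ⟨d, rfl⟩ := Nat.exists_eq_add_of_le h
  rw [Nat.add_comm, Function.iterate_add_apply]
  exact iterGeSelf hf d _

lemma iterOneLe (hf : ∀ x, x + 1 ≤ f x) {n : ℕ} (hn : 1 ≤ n) (x : ℕ) :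
    f x ≤ f^[n] x := by
  obtain ⟨d, rfl⟩ : ∃ d, n = d + 1 := ⟨n - 1, by omega⟩
  rw [Function.iterate_succ_apply]
  exact iterGeSelf hf d _

lemma iterPt (hfg : ∀ x, f x ≤ g x) (hg : Monotone g) :
    ∀ (n : ℕ) {x y : ℕ}, x ≤ y → f^[n] x ≤ g^[n] y
  | 0, _, _, h => h
  | n+1, x, y, h => by
    rw [Function.iterate_succ_apply', Function.iterate_succ_apply']
    exact (hfg _).trans (hg (iterPt hfg hg n h))

lemma smonoAdd (hg : StrictMono g) (u : ℕ) : ∀ d, g u + d ≤ g (u + d)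
  | 0 => le_refl _
  | d+1 => by
    have h1 := smonoAdd hg u d
    have h2 : g (u + d) < g (u + (d + 1)) := hg (by omega)
    omega

lemma iterGap (hfg : ∀ x, f x ≤ g x) (hg : StrictMono g) :
    ∀ (n : ℕ) {x y : ℕ}, x ≤ y → f^[n] x + y ≤ x + g^[n] y
  | 0, x, y, h => by simpa using h
  | n+1, x, y, h => by
    rw [Function.iterate_succ_apply', Function.iterate_succ_apply']
    have IH := iterGap hfg hg n h
    have huv : f^[n] x ≤ g^[n] y := iterPt hfg hg.monotone n h
    set u := f^[n] x
    set v := g^[n] y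
    have h3 := smonoAdd hg u (v - u)
    have h4 : u + (v - u) = v := by omega
    rw [h4] at h3
    have h5 := hfg u
    omega

end Iter

section Amono
variable {k : ℕ}

lemma succ_le_A (hk : 1 ≤ k) : ∀ a b, b + 1 ≤ A a k b := by
  intro a
  induction a with
  | zero => intro b; rw [A0]
  | succ a ih =>
    intro b
    induction b with
    | zero =>
      rw [AS0]
      have := iterExp ih k 0
      omega
    | succ b ihb =>
      rw [ASS]
      have := iterExp ih k (A (a+1) k b)
      omega

lemma A_lt_succ_b (hk : 1 ≤ k) (a b : ℕ) : A a k b < A a k (b+1) := by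
  cases a with
  | zero => rw [A0, A0]; omega
  | succ a =>
    rw [ASS]
    have := iterExp (succ_le_A hk a) k (A (a+1) k b)
    omega

lemma A_strictmono_b (hk : 1 ≤ k) (a : ℕ) : StrictMono (A a k) :=
  strictMono_nat_of_lt_succ (A_lt_succ_b hk a)

lemma A_mono_b (hk : 1 ≤ k) (a : ℕ) : Monotone (A a k) :=
  (A_strictmono_b hk a).monotone

lemma A_le_k_succ (hk : 1 ≤ k) : ∀ a b, A a k b ≤ A a (k+1) b := by
  intro a
  induction a with
  | zero => intro b; rw [A0, A0]
  | succ a ih =>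
    have hmono : Monotone (A a (k+1)) := (A_strictmono_b (by omega) a).monotone
    have hexp : ∀ x, x + 1 ≤ A a (k+1) x := succ_le_A (by omega) a
    intro b
    induction b with
    | zero =>
      rw [AS0, AS0]
      calc (A a k)^[k] 0 ≤ (A a (k+1))^[k] 0 := iterPt (fun x => ih x) hmono k (le_refl 0)
        _ ≤ (A a (k+1))^[k+1] 0 := iterCountMono hexp (by omega) 0
    | succ b ihb =>
      rw [ASS, ASS]
      calc (A a k)^[k] (A (a+1) k b) ≤ (A a (k+1))^[k] (A (a+1) (k+1) b) :=
            iterPt (fun x => ih x) hmono k ihb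
        _ ≤ (A a (k+1))^[k+1] (A (a+1) (k+1) b) := iterCountMono hexp (by omega) _

lemma A_succ_b_le (hk : 2 ≤ k) : ∀ a b, A a k (b+1) ≤ A (a+1) k b := by
  intro a
  have hexp : ∀ x, x + 1 ≤ A a k x := succ_le_A (by omega) a
  have hmono := A_mono_b (k := k) (by omega : 1 ≤ k) a
  intro b
  induction b with
  | zero =>
    rw [AS0]
    obtain ⟨j, rfl⟩ : ∃ j, k = j + 1 := ⟨k - 1, by omega⟩
    rw [Function.iterate_succ_apply]
    have h1 : (1:ℕ) ≤ A a (j+1) 0 := succ_le_A (by omega) a 0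
    calc A a (j+1) 1 ≤ A a (j+1) (A a (j+1) 0) := hmono h1
      _ ≤ (A a (j+1))^[j] (A a (j+1) 0) := iterOneLe hexp (by omega) _
  | succ b ihb =>
    rw [ASS]
    calc A a k (b+2) ≤ A a k (A a k (b+1)) := hmono (succ_le_A (by omega) a (b+1))
      _ ≤ A a k (A (a+1) k b) := hmono ihb
      _ ≤ (A a k)^[k] (A (a+1) k b) := iterOneLe hexp (by omega) _

lemma A_lt_succ_a (hk : 2 ≤ k) (a b : ℕ) : A a k b < A (a+1) k b :=
  lt_of_lt_of_le (A_lt_succ_b (by omega) a b) (A_succ_b_le hk a b)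

lemma A_mono_a (hk : 2 ≤ k) {a a' : ℕ} (h : a ≤ a') (b : ℕ) : A a k b ≤ A a' k b := by
  induction a' with
  | zero => have : a = 0 := by omega
            subst this; exact le_refl _
  | succ a' ih =>
    rcases Nat.lt_or_ge a (a'+1) with h1 | h1
    · exact le_trans (ih (by omega)) (le_of_lt (A_lt_succ_a hk a' b))
    · have : a = a' + 1 := by omega
      subst this; exact le_refl _

lemma a_lt_A (hk : 2 ≤ k) : ∀ a, a < A a k 0 := by
  intro a
  induction a with
  | zero => rw [A0]; omega
  | succ a ih => exact lt_of_le_of_lt ih (A_lt_succ_a hk a 0)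

lemma A_one_zero (k : ℕ) : A 1 k 0 = k := by
  rw [AS0]
  have : ∀ n x : ℕ, (A 0 k)^[n] x = x + n := by
    intro n
    induction n with
    | zero => intro x; simp
    | succ n ih =>
      intro x
      rw [Function.iterate_succ_apply', ih, A0]; omega
  rw [this]; omega

end Amono

section NFBC
variable {k : ℕ}

lemma nf_unique {m a b l a' b' l' : ℕ} (h1 : IsNF k m a b l) (h2 : IsNF k m a' b' l') :
    a = a' ∧ b = b' ∧ l = l' := by
  obtain ⟨e1, le1, amax1, bmax1⟩ := h1
  obtain ⟨e2, le2, amax2, bmax2⟩ := h2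
  have ha : a = a' := le_antisymm (amax2 a le1) (amax1 a' le2)
  subst ha
  have hb : b = b' := le_antisymm (bmax2 b (by omega)) (bmax1 b' (by omega))
  subst hb
  exact ⟨rfl, rfl, by omega⟩

lemma A_pos (hk : 1 ≤ k) (a b : ℕ) : 1 ≤ A a k b := by
  have := succ_le_A hk a b; omega

lemma bc_zero' (hk : 1 ≤ k) {n x : ℕ} (h : BC k n x) (hn : n = 0) : x = 0 := by
  cases h with
  | zero => rfl
  | step hnf h1 h2 =>
    exfalso
    rename_i a b l a' b'
    have := A_pos hk a b
    omega

lemma bc_zero (hk : 1 ≤ k) {x : ℕ} (h : BC k 0 x) : x = 0 := bc_zero' hk h rfl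

lemma bc_inv (hk : 1 ≤ k) {m m' a b l : ℕ} (h : BC k m m') (hnf : IsNF k m a b l) :
    ∃ a₁ b₁, BC k a a₁ ∧ BC k b b₁ ∧ m' = A a₁ (k+1) b₁ + l := by
  cases h with
  | zero =>
    exfalso
    have h1 := hnf.2.1
    have := A_pos hk a 0
    omega
  | step hnf2 ha hb =>
    rename_i a2 b2 l2 a2' b2'
    obtain ⟨e1, e2, e3⟩ := nf_unique hnf2 hnf
    subst e1; subst e2; subst e3
    exact ⟨a2', b2', ha, hb, rfl⟩

lemma bc_pos (hk : 1 ≤ k) {m m' : ℕ} (h : BC k m m') (hm : 0 < m) : 0 < m' := by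
  cases h with
  | zero => exact hm
  | step hnf h1 h2 =>
    rename_i a b l a' b'
    have := A_pos (k := k+1) (by omega) a' b'
    omega

lemma bc_func (hk : 1 ≤ k) {n x y : ℕ} (h1 : BC k n x) (h2 : BC k n y) : x = y := by
  induction h1 generalizing y with
  | zero => exact (bc_zero hk h2).symm
  | step hnf ha hb iha ihb =>
    rename_i a b l a' b'
    obtain ⟨a₁, b₁, ha2, hb2, rfl⟩ := bc_inv hk h2 hnf
    rw [iha ha2, ihb hb2]

lemma bc_le (hk : 2 ≤ k) {n n' : ℕ} (h : BC k n n') : n ≤ n' := by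
  induction h with
  | zero => exact le_refl _
  | step hnf ha hb iha ihb =>
    rename_i a b l a' b'
    have h1 : A a k b ≤ A a (k+1) b := A_le_k_succ (by omega) a b
    have h2 : A a (k+1) b ≤ A a' (k+1) b := A_mono_a (by omega) iha b
    have h3 : A a' (k+1) b ≤ A a' (k+1) b' := A_mono_b (by omega) a' ihb
    omega

lemma bc_small (hk : 2 ≤ k) {n n' : ℕ} (h : BC k n n') (hn : n < k) : n' = n := by
  induction h with
  | zero => rfl
  | step hnf ha hb iha ihb =>
    rename_i a b l a' b'
    have ha0 : a = 0 := by
      by_contra hne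
      have h1 : 1 ≤ a := by omega
      have h2 : A 1 k 0 ≤ A a k 0 := A_mono_a hk h1 0
      rw [A_one_zero] at h2
      have := hnf.2.1
      omega
    subst ha0
    have ha' : a' = 0 := bc_zero (by omega) ha
    subst ha'
    have hb0 : b < k := by
      have := succ_le_A (by omega : 1 ≤ k) 0 b
      omega
    have hb' : b' = b := ihb hb0
    subst hb'
    rw [A0, A0]

lemma bc_gap (hk : 2 ≤ k) {a a₁ b b₁ l : ℕ} (ha : BC k a a₁) (hb : BC k b b₁)
    (hl : A a k b + l < A a k (b+1)) : A a₁ (k+1) b₁ + l < A a₁ (k+1) (b₁+1) := by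
  cases a with
  | zero =>
    have ha0 : a₁ = 0 := bc_zero (by omega) ha
    subst ha0
    rw [A0, A0] at hl ⊢
    omega
  | succ s =>
    have hle : s + 1 ≤ a₁ := bc_le hk ha
    obtain ⟨t, rfl⟩ : ∃ t, a₁ = t + 1 := ⟨a₁ - 1, by omega⟩
    have hbb : b ≤ b₁ := bc_le hk hb
    have hFG : ∀ z, A s k z ≤ A t (k+1) z := fun z =>
      le_trans (A_le_k_succ (by omega) s z) (A_mono_a (by omega) (by omega) z)
    have hGst : StrictMono (A t (k+1)) := A_strictmono_b (by omega) t
    have hxy : A (s+1) k b ≤ A (t+1) (k+1) b₁ :=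
      le_trans (A_le_k_succ (by omega) (s+1) b)
        (le_trans (A_mono_a (by omega) (by omega) b) (A_mono_b (by omega) (t+1) hbb))
    rw [ASS] at hl ⊢
    have hgap := iterGap hFG hGst k hxy
    have hextra : (A t (k+1))^[k] (A (t+1) (k+1) b₁) ≤ (A t (k+1))^[k+1] (A (t+1) (k+1) b₁) :=
      iterCountMono (succ_le_A (by omega) t) (by omega) _
    omega

end NFBC

section Core
variable {k : ℕ}

lemma psi_core (hk : 3 ≤ k) (N : ℕ)
    (oracle : ∀ p q p₁ q₁, p < q → q < N → BC k p p₁ → BC k q q₁ → p₁ < q₁) :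
    ∀ m a a₁ m₁ j, a < N → BC k a a₁ → BC k m m₁ → j ≤ k → m < (A a k)^[j] 0 →
      m₁ < (A a₁ (k+1))^[j+1] 0 := by
  intro m
  induction m using Nat.strong_induction_on with
  | _ m IH =>
  intro a a₁ m₁ j haN hba hbm hj hlt
  have hexp1 : ∀ x, x + 1 ≤ A a₁ (k+1) x := succ_le_A (by omega) a₁
  have hexpA : ∀ x, x + 1 ≤ A a k x := succ_le_A (by omega) a
  rcases Nat.eq_zero_or_pos m with rfl | hmpos
  · have hz : m₁ = 0 := bc_zero (by omega) hbm
    subst hz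
    have := iterExp hexp1 (j+1) 0
    omega
  obtain ⟨i, rfl⟩ : ∃ i, j = i + 1 := by
    cases j with
    | zero => simp at hlt
    | succ i => exact ⟨i, rfl⟩
  cases hbm with
  | zero => omega
  | step hnf hpp hss =>
    rename_i p s r p₁ s₁
    have hexpP : ∀ x, x + 1 ≤ A p k x := succ_le_A (by omega) p
    have hple : A p k 0 ≤ A p k s + r := hnf.2.1
    have hp_le_a : p ≤ a := by
      by_contra hcon
      have h1 : A (a+1) k 0 ≤ A p k 0 := A_mono_a (by omega) (by omega) 0
      have h2 : (A a k)^[i+1] 0 ≤ (A a k)^[k] 0 := iterCountMono hexpA hj 0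
      rw [AS0] at h1
      omega
    have hmlt1 : A p k s + r < A p k (s+1) := by
      by_contra hcon
      have := hnf.2.2.2 (s+1) (by omega)
      omega
    have hs_lt_m : s < A p k s + r := by
      have := hexpP s; omega
    by_cases hpa : p = a
    · subst hpa
      have hp₁ : p₁ = a₁ := bc_func (by omega) hpp hba
      subst hp₁
      have h5 : (A p k)^[i+1] 0 = A p k ((A p k)^[i] 0) := Function.iterate_succ_apply' _ i 0
      have hsc : s < (A p k)^[i] 0 := by
        have h6 : A p k s < A p k ((A p k)^[i] 0) := by omega
        exact (A_strictmono_b (by omega) p).lt_iff_lt.mp h6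
      have hs₁ := IH s hs_lt_m p p₁ s₁ i haN hba hss (by omega) hsc
      have hgap : A p₁ (k+1) s₁ + r < A p₁ (k+1) (s₁+1) := bc_gap (by omega) hba hss hmlt1
      have h7 : A p₁ (k+1) (s₁+1) ≤ A p₁ (k+1) ((A p₁ (k+1))^[i+1] 0) :=
        A_mono_b (by omega) p₁ (by omega)
      have h8 : A p₁ (k+1) ((A p₁ (k+1))^[i+1] 0) = (A p₁ (k+1))^[i+1+1] 0 :=
        (Function.iterate_succ_apply' _ (i+1) 0).symm
      omega
    · have hplt : p < a := lt_of_le_of_ne hp_le_a hpa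
      obtain ⟨kk, hkk⟩ : ∃ kk, k = kk + 1 := ⟨k - 1, by omega⟩
      have hm2 : A p k s + r < (A p k)^[k] 0 := by
        rw [← AS0]
        by_contra hcon
        have := hnf.2.2.1 (p+1) (by omega)
        omega
      have hsc : s < (A p k)^[kk] 0 := by
        have h5 : (A p k)^[k] 0 = A p k ((A p k)^[kk] 0) := by
          rw [hkk, Function.iterate_succ_apply']
        have h6 : A p k s < A p k ((A p k)^[kk] 0) := by omega
        exact (A_strictmono_b (by omega) p).lt_iff_lt.mp h6
      have hs₁ : s₁ < (A p₁ (k+1))^[kk+1] 0 :=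
        IH s hs_lt_m p p₁ s₁ kk (lt_trans hplt haN) hpp hss (by omega) hsc
      have hgap : A p₁ (k+1) s₁ + r < A p₁ (k+1) (s₁+1) := bc_gap (by omega) hpp hss hmlt1
      have hup : A p₁ (k+1) s₁ + r < A (p₁+1) (k+1) 0 := by
        rw [AS0]
        have h7 : A p₁ (k+1) (s₁+1) ≤ A p₁ (k+1) ((A p₁ (k+1))^[kk+1] 0) :=
          A_mono_b (by omega) p₁ (by omega)
        have h8 : A p₁ (k+1) ((A p₁ (k+1))^[kk+1] 0) = (A p₁ (k+1))^[kk+1+1] 0 :=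
          (Function.iterate_succ_apply' _ (kk+1) 0).symm
        have h9 : (A p₁ (k+1))^[kk+1+1] 0 ≤ (A p₁ (k+1))^[k+1] 0 :=
          iterCountMono (succ_le_A (by omega) p₁) (by omega) 0
        omega
      have hor : p₁ < a₁ := oracle p a p₁ a₁ hplt haN hpp hba
      have h10 : A (p₁+1) (k+1) 0 ≤ A a₁ (k+1) 0 := A_mono_a (by omega) (by omega) 0
      have h11 : A a₁ (k+1) 0 ≤ (A a₁ (k+1))^[i+1+1] 0 := by
        have := iterOneLe hexp1 (n := i+1+1) (by omega) 0
        exact this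
      omega

lemma bc_mono (hk : 3 ≤ k) : ∀ n m m₁ n₁, m < n → BC k m m₁ → BC k n n₁ → m₁ < n₁ := by
  intro n
  induction n using Nat.strong_induction_on with
  | _ n IH =>
  intro m m₁ n₁ hmn hbm hbn
  have horacle : ∀ p q p₁ q₁, p < q → q < n → BC k p p₁ → BC k q q₁ → p₁ < q₁ :=
    fun p q p₁ q₁ h1 h2 h3 h4 => IH q h2 p p₁ q₁ h1 h3 h4
  cases hbn with
  | zero => omega
  | step hnfn hca hcb =>
    rename_i c d e c₁ d₁
    rcases Nat.eq_zero_or_pos m with rfl | hmpos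
    · have hz : m₁ = 0 := bc_zero (by omega) hbm
      have := A_pos (k := k+1) (by omega) c₁ d₁
      omega
    cases hbm with
    | zero => omega
    | step hnfm haa hab =>
      rename_i a b l a₁ b₁
      -- lexicographic comparison
      have hac : a ≤ c := hnfn.2.2.1 a (le_trans hnfm.2.1 (le_of_lt hmn))
      rcases lt_or_eq_of_le hac with hlt | heq
      · -- a < c
        have haN : a < A c k d + e := by
          have h1 := a_lt_A (k := k) (by omega) a
          have h2 := hnfm.2.1
          omega
        have hcN : c < A c k d + e := by
          have h1 := a_lt_A (k := k) (by omega) c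
          have h2 := hnfn.2.1
          omega
        have hac₁ : a₁ < c₁ := IH c hcN a a₁ c₁ hlt haa hca
        have hmb : A a k b + l < A (a+1) k 0 := by
          by_contra hcon
          have := hnfm.2.2.1 (a+1) (by omega)
          omega
        rw [AS0] at hmb
        have hbnd := psi_core hk (A c k d + e) horacle (A a k b + l) a a₁
          (A a₁ (k+1) b₁ + l) k haN haa (BC.step hnfm haa hab) (le_refl k) hmb
        rw [← AS0] at hbnd
        have h3 : A (a₁+1) (k+1) 0 ≤ A c₁ (k+1) 0 := A_mono_a (by omega) (by omega) 0
        have h4 : A c₁ (k+1) 0 ≤ A c₁ (k+1) d₁ := A_mono_b (by omega) c₁ (by omega)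
        omega
      · subst heq
        have hbd : b ≤ d := hnfn.2.2.2 b (le_trans (by omega : A a k b ≤ A a k b + l) (le_of_lt hmn))
        have ha₁ : a₁ = c₁ := bc_func (by omega) haa hca
        subst ha₁
        rcases lt_or_eq_of_le hbd with hblt | hbeq
        · have hdN : d < A a k d + e := by
            have := succ_le_A (by omega : 1 ≤ k) a d
            omega
          have hbd₁ : b₁ < d₁ := IH d hdN b b₁ d₁ hblt hab hcb
          have hmlt1 : A a k b + l < A a k (b+1) := by
            by_contra hcon
            have := hnfm.2.2.2 (b+1) (by omega)
            omega
          have hgap : A a₁ (k+1) b₁ + l < A a₁ (k+1) (b₁+1) := bc_gap (by omega) haa hab hmlt1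
          have h5 : A a₁ (k+1) (b₁+1) ≤ A a₁ (k+1) d₁ := A_mono_b (by omega) a₁ (by omega)
          omega
        · subst hbeq
          have hb₁ : b₁ = d₁ := bc_func (by omega) hab hcb
          subst hb₁
          omega

lemma bc_bound (hk : 3 ≤ k) {a a₁ m m₁ : ℕ} (hba : BC k a a₁) (hbm : BC k m m₁)
    (h : m < A (a+1) k 0) : m₁ < A (a₁+1) (k+1) 0 := by
  rw [AS0] at h
  rw [AS0]
  have horacle : ∀ p q p₁ q₁, p < q → q < a + 1 → BC k p p₁ → BC k q q₁ → p₁ < q₁ :=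
    fun p q p₁ q₁ h1 h2 h3 h4 => bc_mono hk q p p₁ q₁ h1 h3 h4
  exact psi_core hk (a+1) horacle m a a₁ m₁ k (by omega) hba hbm (le_refl k) h

end Core

section Main
open Ordinal
variable {k : ℕ}

lemma bc_nf (hk : 3 ≤ k) {a b l a₁ b₁ : ℕ} (hnf : IsNF k (A a k b + l) a b l)
    (hba : BC k a a₁) (hbb : BC k b b₁) :
    IsNF (k+1) (A a₁ (k+1) b₁ + l) a₁ b₁ l := by
  refine ⟨rfl, ?_, ?_, ?_⟩
  · have := A_mono_b (k := k+1) (by omega) a₁ (Nat.zero_le b₁)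
    omega
  · intro a' h'
    by_contra hcon
    have hma : A a k b + l < A (a+1) k 0 := by
      by_contra hcon2
      have := hnf.2.2.1 (a+1) (by omega)
      omega
    have hbnd : A a₁ (k+1) b₁ + l < A (a₁+1) (k+1) 0 :=
      bc_bound hk hba (BC.step hnf hba hbb) hma
    have h2 : A (a₁+1) (k+1) 0 ≤ A a' (k+1) 0 := A_mono_a (by omega) (by omega) 0
    omega
  · intro b' h'
    by_contra hcon
    have hmlt1 : A a k b + l < A a k (b+1) := by
      by_contra hcon2
      have := hnf.2.2.2 (b+1) (by omega)
      omega
    have hgap : A a₁ (k+1) b₁ + l < A a₁ (k+1) (b₁+1) := bc_gap (by omega) hba hbb hmlt1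
    have h2 : A a₁ (k+1) (b₁+1) ≤ A a₁ (k+1) b' := A_mono_b (by omega) a₁ (by omega)
    omega

lemma psi_zero_inv (hk : 1 ≤ k) {n : ℕ} {o : Ordinal} (h : Psi k n o) (hn : n = 0) :
    o = 0 := by
  cases h with
  | zero => rfl
  | @base b l hnf => exfalso; have := A_pos hk 0 b; omega
  | @one b l ob hnf hb => exfalso; have := A_pos hk 1 b; omega
  | @ge a2 b2 l2 oa ob ha2 hnf hpa hpb => exfalso; have := A_pos hk a2 b2; omega

lemma psi_inv (hk : 1 ≤ k) {n a b l : ℕ} {o : Ordinal} (h : Psi k n o)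
    (hnf : IsNF k n a b l) :
    (a = 0 ∧ l = 0 ∧ o = (b : Ordinal) + 1) ∨
    (a = 1 ∧ ∃ ob, Psi k b ob ∧ o = omega0 * (1 + ob) + (l : Ordinal)) ∨
    (2 ≤ a ∧ ∃ oa ob, Psi k a oa ∧ Psi k b ob ∧
      o = omega0 ^ (omega0 + msub 2 oa) + omega0 * ob + (l : Ordinal)) := by
  cases h with
  | zero =>
    exfalso
    have h1 := hnf.2.1
    have := A_pos hk a 0
    omega
  | @base b2 l2 hnf2 =>
    obtain ⟨e1, e2, e3⟩ := nf_unique hnf2 hnf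
    left
    refine ⟨e1.symm, ?_, by rw [e2]⟩
    have h1 := hnf.2.2.2 (b + l) (by rw [hnf.1, ← e1, A0, ← e1, A0] at *; omega)
    omega
  | @one b2 l2 ob2 hnf2 hb =>
    obtain ⟨e1, e2, e3⟩ := nf_unique hnf2 hnf
    right; left
    exact ⟨e1.symm, ob2, e2 ▸ hb, by rw [e3]⟩
  | @ge a2 b2 l2 oa2 ob2 ha2 hnf2 hpa hpb =>
    obtain ⟨e1, e2, e3⟩ := nf_unique hnf2 hnf
    right; right
    exact ⟨e1 ▸ ha2, oa2, ob2, e1 ▸ hpa, e2 ▸ hpb, by rw [e3]⟩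


end Main

/-- Base change is invariant under the ordinal assignment:
`ψ_{k+1}(m[k←k+1]) = ψ_k(m)`. -/
theorem psi_base_change (k m m' : ℕ) (o o' : Ordinal) (hk : 3 ≤ k)
    (h : BC k m m') (hm : Psi k m o) (hm' : Psi (k + 1) m' o') : o' = o := by
  induction hm generalizing m' o' with
  | zero =>
    have hz : m' = 0 := bc_zero (by omega) h
    exact psi_zero_inv (by omega) hm' hz
  | @base b l hnf =>
    have hl0 : l = 0 := by
      have h1 := hnf.2.2.2 (b + l) (by rw [A0, A0]; omega)
      omega
    subst hl0
    have hmk : A 0 k b + 0 < k := by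
      by_contra hcon
      have := hnf.2.2.1 1 (by rw [A_one_zero]; omega)
      omega
    have hmm : m' = A 0 k b + 0 := bc_small (by omega) h hmk
    subst hmm
    have hnf' : IsNF (k+1) (A 0 k b + 0) 0 b 0 := by
      refine ⟨by rw [A0, A0], by rw [A0, A0]; omega, ?_, ?_⟩
      · intro a' h'
        by_contra hcon
        have h2 : A 1 (k+1) 0 ≤ A a' (k+1) 0 := A_mono_a (by omega) (by omega) 0
        rw [A_one_zero] at h2
        rw [A0] at hmk h'
        omega
      · intro b' h'
        rw [A0, A0] at h'
        omega
    rcases psi_inv (by omega) hm' hnf' with ⟨_, _, h3⟩ | ⟨hbad, _⟩ | ⟨hbad, _⟩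
    · exact h3
    · omega
    · omega
  | @one b l ob hnf hb IHb =>
    obtain ⟨a₁, b₁, hba, hbb, rfl⟩ := bc_inv (by omega) h hnf
    have ha₁ : a₁ = 1 := bc_small (by omega) hba (by omega)
    subst ha₁
    have hnf' := bc_nf hk hnf hba hbb
    rcases psi_inv (by omega) hm' hnf' with ⟨hbad, _⟩ | ⟨_, ob', hpb, ho⟩ | ⟨hbad, _⟩
    · omega
    · rw [ho, IHb b₁ ob' hbb hpb]
    · omega
  | @ge a b l oa ob ha2 hnf hpa hpb IHa IHb =>
    obtain ⟨a₁, b₁, hba, hbb, rfl⟩ := bc_inv (by omega) h hnf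
    have hnf' := bc_nf hk hnf hba hbb
    have ha₁2 : 2 ≤ a₁ := le_trans ha2 (bc_le (by omega) hba)
    rcases psi_inv (by omega) hm' hnf' with ⟨hbad, _⟩ | ⟨hbad, _⟩ |
      ⟨_, oa', ob', hpa', hpb', ho⟩
    · omega
    · omega
    · rw [ho, IHa a₁ oa' hba hpa', IHb b₁ ob' hbb hpb']
end

section
/- For every m, the Goodstein sequence defined by m_0 = m and m_{l+1} = m_l[l+3←l+4] - 1 (and m_{l+1}=0 if m_l=0) terminates: there exists l with m_l = 0. -/
theorem lt_iterate_of_lt_apply {α : Type*} [Preorder α] {f : α → α} (hf : ∀ x, x < f x)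
    {n : ℕ} (hn : n ≠ 0) (x : α) : x < f^[n] x := by
  obtain ⟨n, rfl⟩ := Nat.exists_eq_succ_of_ne_zero hn
  rw [Function.iterate_succ_apply']
  exact (Function.id_le_iterate_of_id_le (fun y => (hf y).le) n x).trans_lt (hf _)

theorem StrictMono.monotone_sub_self {f : ℕ → ℕ} (hf : StrictMono f) :
    Monotone fun x => f x - x := by
  intro x y h
  dsimp only
  induction y, h using Nat.le_induction with
  | base => rfl
  | succ y _ ih => have := hf (Nat.lt_add_one y); omega

namespace Ordinal

theorem omega0_le_veblen {o x : Ordinal} (h : o ≠ 0 ∨ x ≠ 0) : ω ≤ veblen o x := by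
  rcases h with ho | hx
  · rw [← veblen_veblen_of_lt (pos_iff_ne_zero.2 ho) x, veblen_zero_apply]
    exact left_le_opow ω veblen_pos
  · calc ω ≤ ω ^ x := left_le_opow ω (pos_iff_ne_zero.2 hx)
      _ = veblen 0 x := (veblen_zero_apply x).symm
      _ ≤ veblen o x := veblen_left_monotone x zero_le

theorem add_natCast_lt_veblen {y o x : Ordinal} (hy : y < veblen o x) (h : o ≠ 0 ∨ x ≠ 0)
    (n : ℕ) : y + n < veblen o x := by
  obtain ⟨z, hz⟩ := veblen_mem_range_opow o x
  have hn : (n : Ordinal) < veblen o x := (natCast_lt_omega0 n).trans_le (omega0_le_veblen h)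
  rw [← hz] at hy hn ⊢
  exact isPrincipal_add_omega0_opow z hy hn

theorem veblen_add_natCast_lt_veblen_add_natCast {o₁ x₁ o₂ x₂ : Ordinal} {n₁ n₂ : ℕ}
    (h : o₁ < o₂ ∧ x₁ < veblen o₂ x₂ ∨ o₁ = o₂ ∧ x₁ < x₂ ∨ o₁ = o₂ ∧ x₁ = x₂ ∧ n₁ < n₂) :
    veblen o₁ x₁ + n₁ < veblen o₂ x₂ + n₂ := by
  rcases h with ⟨ho, hx⟩ | ⟨rfl, hx⟩ | ⟨rfl, rfl, hn⟩
  · refine (add_natCast_lt_veblen ?_ (Or.inl (pos_of_gt ho).ne') n₁).trans_le le_self_add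
    exact veblen_lt_veblen_iff.2 (Or.inr (Or.inl ⟨ho, hx⟩))
  · refine (add_natCast_lt_veblen ?_ (Or.inr (pos_of_gt hx).ne') n₁).trans_le le_self_add
    exact veblen_right_strictMono o₁ hx
  · exact add_lt_add_right (by exact_mod_cast hn) _

end Ordinal

namespace A

variable {a a' b b' k k' : ℕ}

@[simp] theorem zero_left : A 0 k b = b + 1 := by rw [A]

theorem succ_zero : A (a + 1) k 0 = (A a k)^[k] 0 := by rw [A]

theorem succ_succ : A (a + 1) k (b + 1) = (A a k)^[k] (A (a + 1) k b) := by rw [A]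

theorem lt_self (hk : 1 ≤ k) (a b : ℕ) : b < A a k b := by
  induction a generalizing b with
  | zero => simp
  | succ a ih =>
    induction b with
    | zero => rw [succ_zero]; exact lt_iterate_of_lt_apply ih (by omega) 0
    | succ b ihb =>
      rw [succ_succ]
      exact lt_of_le_of_lt ihb (lt_iterate_of_lt_apply ih (by omega) _)

theorem strictMono (hk : 1 ≤ k) (a : ℕ) : StrictMono (A a k) := by
  refine strictMono_nat_of_lt_succ fun b => ?_
  cases a with
  | zero => simp
  | succ a => rw [succ_succ]; exact lt_iterate_of_lt_apply (lt_self hk a) (by omega) _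

theorem le_succ_left (hk : 1 ≤ k) (a b : ℕ) : A a k b ≤ A (a + 1) k b := by
  obtain ⟨j, rfl⟩ : ∃ j, k = j + 1 := ⟨k - 1, by omega⟩
  have hid : id ≤ A a (j + 1) := fun x => (lt_self hk a x).le
  cases b with
  | zero =>
    rw [succ_zero, Function.iterate_succ_apply]
    exact Function.id_le_iterate_of_id_le hid j _
  | succ b =>
    rw [succ_succ, Function.iterate_succ_apply']
    exact (strictMono hk a).monotone
      ((lt_self hk (a + 1) b).trans_le (Function.id_le_iterate_of_id_le hid j _))

theorem le_succ_base (hk : 1 ≤ k) (a : ℕ) : ∀ b, A a k b ≤ A a (k + 1) b := by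
  induction a with
  | zero => simp
  | succ a ih =>
    have step {x y : ℕ} (h : x ≤ y) : (A a k)^[k] x ≤ (A a (k + 1))^[k + 1] y := by
      rw [Function.iterate_succ_apply']
      exact (Monotone.iterate_le_of_le (strictMono hk a).monotone ih k x).trans
        (((strictMono (by omega) a).monotone.iterate k h).trans (lt_self (by omega) a _).le)
    intro b
    induction b with
    | zero => rw [succ_zero, succ_zero]; exact step le_rfl
    | succ b ihb => rw [succ_succ, succ_succ]; exact step ihb

theorem mono (hk : 1 ≤ k) (ha : a ≤ a') (hk' : k ≤ k') (hb : b ≤ b') : A a k b ≤ A a' k' b' := by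
  have hlevel : A a k b ≤ A a' k b := by
    induction a', ha using Nat.le_induction with
    | base => rfl
    | succ a' _ ih => exact ih.trans (le_succ_left hk a' b)
  have hbase : A a' k b ≤ A a' k' b := by
    induction k', hk' using Nat.le_induction with
    | base => rfl
    | succ k' _ ih => exact ih.trans (le_succ_base (by omega) a' b)
  exact hlevel.trans (hbase.trans ((strictMono (by omega) a').monotone hb))

theorem strictMono_level_zero (hk : 2 ≤ k) : StrictMono fun a => A a k 0 := by
  refine strictMono_nat_of_lt_succ fun a => ?_
  obtain ⟨j, rfl⟩ : ∃ j, k = j + 1 := ⟨k - 1, by omega⟩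
  rw [succ_zero, Function.iterate_succ_apply]
  exact lt_iterate_of_lt_apply (lt_self (by omega) a) (by omega) _

theorem lt_level_zero (hk : 2 ≤ k) (a : ℕ) : a < A a k 0 := by
  simpa using (strictMono_level_zero hk).add_le_nat a 0

def gap (a k b : ℕ) : ℕ := A a k (b + 1) - A a k b

theorem add_gap (hk : 1 ≤ k) (a b : ℕ) : A a k b + gap a k b = A a k (b + 1) := by
  have := strictMono hk a (Nat.lt_add_one b)
  unfold gap; omega

theorem gap_succ_left (a k b : ℕ) :
    gap (a + 1) k b = (A a k)^[k] (A (a + 1) k b) - A (a + 1) k b := by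
  rw [gap, succ_succ]

theorem gap_mono_arg (hk : 1 ≤ k) (a : ℕ) : Monotone (gap a k) := by
  intro b b' h
  cases a with
  | zero => simp [gap]
  | succ a =>
    rw [gap_succ_left, gap_succ_left]
    exact ((strictMono hk a).iterate k).monotone_sub_self ((strictMono hk (a + 1)).monotone h)

theorem gap_le_gap_succ_left (hk : 1 ≤ k) (a b : ℕ) : gap a k b ≤ gap (a + 1) k b := by
  set x := A (a + 1) k b
  have hbx : b < x := lt_self hk (a + 1) b
  have hx : x ≤ A a k (x - 1) := by have := lt_self hk a (x - 1); omega
  have hiter : A a k x ≤ (A a k)^[k] x := by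
    obtain ⟨j, rfl⟩ : ∃ j, k = j + 1 := ⟨k - 1, by omega⟩
    rw [Function.iterate_succ_apply]
    exact Function.id_le_iterate_of_id_le (fun y => (lt_self hk a y).le) j _
  calc gap a k b ≤ gap a k (x - 1) := gap_mono_arg hk a (by omega)
    _ = A a k x - A a k (x - 1) := by rw [gap, Nat.sub_add_cancel (by omega)]
    _ ≤ (A a k)^[k] x - x := by omega
    _ = gap (a + 1) k b := (gap_succ_left a k b).symm

theorem gap_le_gap_succ_base (hk : 1 ≤ k) (a b : ℕ) : gap a k b ≤ gap a (k + 1) b := by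
  cases a with
  | zero => simp [gap]
  | succ a =>
    set x := A (a + 1) k b
    have hiter : (A a k)^[k] x ≤ (A a (k + 1))^[k + 1] x := by
      rw [Function.iterate_succ_apply']
      exact (Monotone.iterate_le_of_le (strictMono hk a).monotone (le_succ_base hk a) k x).trans
        (lt_self (by omega) a _).le
    rw [gap_succ_left, gap_succ_left]
    calc (A a k)^[k] x - x ≤ (A a (k + 1))^[k + 1] x - x := by omega
      _ ≤ _ := ((strictMono (by omega) a).iterate (k + 1)).monotone_sub_self
          (le_succ_base hk (a + 1) b)

theorem gap_le_gap (hk : 1 ≤ k) (ha : a ≤ a') (hb : b ≤ b') : gap a k b ≤ gap a' (k + 1) b' := by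
  have hlevel : gap a k b ≤ gap a' k b := by
    induction a', ha using Nat.le_induction with
    | base => rfl
    | succ a' _ ih => exact ih.trans (gap_le_gap_succ_left hk a' b)
  exact hlevel.trans ((gap_le_gap_succ_base hk a' b).trans (gap_mono_arg (by omega) a' hb))

end A

-- The search bound `m - 1` suffices (for `0 < m`, `2 ≤ k`) since `a < A a k 0` and `b < A a k b`.
def nfLevel (k m : ℕ) : ℕ := Nat.findGreatest (fun a => A a k 0 ≤ m) (m - 1)

def nfArg (k m : ℕ) : ℕ := Nat.findGreatest (fun b => A (nfLevel k m) k b ≤ m) (m - 1)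

def nfRem (k m : ℕ) : ℕ := m - A (nfLevel k m) k (nfArg k m)

theorem nfLevel_lt {k m : ℕ} (hm : 0 < m) : nfLevel k m < m :=
  (Nat.findGreatest_le _).trans_lt (by omega)

theorem nfArg_lt {k m : ℕ} (hm : 0 < m) : nfArg k m < m :=
  (Nat.findGreatest_le _).trans_lt (by omega)

section NormalForm

variable {k m a b l : ℕ}

theorem isNF_iff (hk : 1 ≤ k) :
    IsNF k m a b l ↔ m = A a k b + l ∧ m < A (a + 1) k 0 ∧ m < A a k (b + 1) := by
  constructor
  · rintro ⟨hm, -, hlevel, harg⟩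
    refine ⟨hm, ?_, ?_⟩
    · by_contra h; have := hlevel (a + 1) (by omega); omega
    · by_contra h; have := harg (b + 1) (by omega); omega
  · rintro ⟨hm, hlevel, harg⟩
    refine ⟨hm, (A.mono hk le_rfl le_rfl (Nat.zero_le b)).trans (by omega), ?_, ?_⟩
    · intro a' ha'
      by_contra h
      have := A.mono hk (show a + 1 ≤ a' by omega) le_rfl le_rfl (b := 0) (b' := 0)
      omega
    · intro b' hb'
      by_contra h
      have := (A.strictMono hk a).monotone (show b + 1 ≤ b' by omega)
      omega

theorem isNF_of_pos (hk : 2 ≤ k) (hm : 0 < m) : IsNF k m (nfLevel k m) (nfArg k m) (nfRem k m) := by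
  have hlevel : A (nfLevel k m) k 0 ≤ m :=
    Nat.findGreatest_spec (P := fun a => A a k 0 ≤ m) (Nat.zero_le _)
      (by simp only [A.zero_left]; omega)
  have harg : A (nfLevel k m) k (nfArg k m) ≤ m :=
    Nat.findGreatest_spec (P := fun b => A (nfLevel k m) k b ≤ m) (Nat.zero_le _) hlevel
  refine ⟨by unfold nfRem; omega, hlevel, fun a' ha' => ?_, fun b' hb' => ?_⟩
  · exact Nat.le_findGreatest (by have := A.lt_level_zero hk a'; omega) ha'
  · exact Nat.le_findGreatest (by have := A.lt_self (k := k) (by omega) (nfLevel k m) b'; omega) hb'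

namespace IsNF

theorem unique {a' b' l' : ℕ} (h : IsNF k m a b l) (h' : IsNF k m a' b' l') :
    a = a' ∧ b = b' ∧ l = l' := by
  obtain ⟨hm, hlevel, hmaxlevel, hmaxarg⟩ := h
  obtain ⟨hm', hlevel', hmaxlevel', hmaxarg'⟩ := h'
  obtain rfl : a = a' := le_antisymm (hmaxlevel' a hlevel) (hmaxlevel a' hlevel')
  obtain rfl : b = b' := le_antisymm (hmaxarg' b (by omega)) (hmaxarg b' (by omega))
  exact ⟨rfl, rfl, by omega⟩

theorem pos (hk : 1 ≤ k) (h : IsNF k m a b l) : 0 < m := by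
  have := A.lt_self hk a b; have := h.1; omega

theorem nf_eq (hk : 2 ≤ k) (h : IsNF k m a b l) :
    nfLevel k m = a ∧ nfArg k m = b ∧ nfRem k m = l :=
  (isNF_of_pos hk (h.pos (by omega))).unique h

theorem level_lt (hk : 2 ≤ k) (h : IsNF k m a b l) : a < m :=
  (A.lt_level_zero hk a).trans_le h.2.1

theorem arg_lt (hk : 1 ≤ k) (h : IsNF k m a b l) : b < m := by
  have := A.lt_self hk a b; have := h.1; omega

theorem lt_A_succ_zero (hk : 1 ≤ k) (h : IsNF k m a b l) : m < A (a + 1) k 0 :=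
  ((isNF_iff hk).1 h).2.1

theorem rem_lt_gap (hk : 1 ≤ k) (h : IsNF k m a b l) : l < A.gap a k b := by
  have := ((isNF_iff hk).1 h).2.2; have := A.add_gap hk a b; have := h.1; omega

theorem isNF_A (hk : 1 ≤ k) (h : IsNF k m a b l) : IsNF k (A a k b) a b 0 := by
  obtain ⟨hm, hlevel, harg⟩ := (isNF_iff hk).1 h
  exact (isNF_iff hk).2 ⟨rfl, by omega, by omega⟩

theorem arg_lt_iterate (hk : 1 ≤ k) {j : ℕ} (h : IsNF k m a b l) (hm : m < (A a k)^[j + 1] 0) :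
    b < (A a k)^[j] 0 := by
  rw [Function.iterate_succ_apply'] at hm
  exact (A.strictMono hk a).lt_iff_lt.1 (by have := h.1; omega)

theorem level_le_of_lt_A_iterate (hk : 1 ≤ k) {c j : ℕ} (h : IsNF k m a b l) (hj : j ≤ k)
    (hm : m < (A c k)^[j] 0) : a ≤ c := by
  by_contra hca
  have hiter : (A c k)^[j] 0 ≤ A (c + 1) k 0 := by
    rw [A.succ_zero]
    exact Monotone.monotone_iterate_of_le_map (A.strictMono hk c).monotone
      (A.lt_self hk c 0).le hj
  have := A.mono hk (show c + 1 ≤ a by omega) le_rfl le_rfl (b := 0) (b' := 0)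
  have := h.2.1
  omega

theorem lex {q e f j : ℕ} (hm : IsNF k m a b l) (hq : IsNF k q e f j) (hmq : m < q) :
    a < e ∨ a = e ∧ b < f ∨ a = e ∧ b = f ∧ l < j := by
  have hae : a ≤ e := hq.2.2.1 a (hm.2.1.trans hmq.le)
  obtain hae | rfl := hae.lt_or_eq
  · exact Or.inl hae
  have hbf : b ≤ f := hq.2.2.2 b (by have := hm.1; omega)
  obtain hbf | rfl := hbf.lt_or_eq
  · exact Or.inr (Or.inl ⟨rfl, hbf⟩)
  · exact Or.inr (Or.inr ⟨rfl, rfl, by have := hm.1; have := hq.1; omega⟩)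

end IsNF

end NormalForm

def baseChange (k : ℕ) : ℕ → ℕ
  | 0 => 0
  | m + 1 =>
    A (baseChange k (nfLevel k (m + 1))) (k + 1) (baseChange k (nfArg k (m + 1))) + nfRem k (m + 1)
  decreasing_by
  · exact nfLevel_lt m.succ_pos
  · exact nfArg_lt m.succ_pos

section BaseChange

variable {k m a b l N : ℕ}

@[simp] theorem baseChange_zero (k : ℕ) : baseChange k 0 = 0 := by rw [baseChange]

theorem IsNF.baseChange_eq (hk : 2 ≤ k) (h : IsNF k m a b l) :
    baseChange k m = A (baseChange k a) (k + 1) (baseChange k b) + l := by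
  obtain ⟨m, rfl⟩ := Nat.exists_eq_add_one_of_ne_zero (h.pos (by omega)).ne'
  obtain ⟨ha, hb, hl⟩ := h.nf_eq hk
  rw [baseChange, ha, hb, hl]

theorem le_baseChange (hk : 2 ≤ k) (m : ℕ) : m ≤ baseChange k m := by
  induction m using Nat.strong_induction_on with
  | _ m ih =>
    obtain rfl | hm := Nat.eq_zero_or_pos m
    · simp
    have h := isNF_of_pos hk hm
    rw [h.baseChange_eq hk]
    have := A.mono (by omega) (ih _ (h.level_lt hk)) (Nat.le_add_right k 1)
      (ih _ (h.arg_lt (by omega)))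
    have := h.1
    omega

theorem IsNF.baseChange_lt_A_succ (hk : 2 ≤ k) (h : IsNF k m a b l) :
    baseChange k m < A (baseChange k a) (k + 1) (baseChange k b + 1) := by
  have hgap : A.gap a k b ≤ A.gap (baseChange k a) (k + 1) (baseChange k b) :=
    A.gap_le_gap (by omega) (le_baseChange hk a) (le_baseChange hk b)
  have := h.rem_lt_gap (by omega)
  have := A.add_gap (k := k + 1) (by omega) (baseChange k a) (baseChange k b)
  rw [h.baseChange_eq hk]
  omega

/- The bound behind `m[k←k+1] < A_{a[k←k+1]+1}(k + 1, 0)`. Its proof needs base change to be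
monotone below `N`, while monotonicity at `N` needs this bound below `N`: hence the two are proved
in tandem (`baseChange_strictMono`). -/
theorem baseChange_lt_A_iterate_of_strictMonoOn (hk : 2 ≤ k)
    (hmono : StrictMonoOn (baseChange k) (Set.Iio N)) (d : ℕ) :
    d < N → ∀ {c j : ℕ}, c < N → j ≤ k → d < (A c k)^[j] 0 →
      baseChange k d < (A (baseChange k c) (k + 1))^[j + 1] 0 := by
  induction d using Nat.strong_induction_on with
  | _ d ih =>
  intro hdN c j hcN hjk hd
  obtain rfl | hd0 := Nat.eq_zero_or_pos d
  · simpa using lt_iterate_of_lt_apply (A.lt_self (by omega) (baseChange k c)) j.succ_ne_zero 0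
  obtain ⟨e, f, i, h⟩ : ∃ e f i, IsNF k d e f i := ⟨_, _, _, isNF_of_pos hk hd0⟩
  have hstep {j' : ℕ} (hd' : d < (A e k)^[j' + 1] 0) (hj' : j' < k) :
      baseChange k d < (A (baseChange k e) (k + 1))^[j' + 2] 0 := by
    have hf := ih f (h.arg_lt (by omega)) (by have := h.arg_lt (k := k) (by omega); omega)
      (by have := h.level_lt hk; omega) hj'.le (h.arg_lt_iterate (by omega) hd')
    rw [Function.iterate_succ_apply' _ (j' + 1)]
    exact (h.baseChange_lt_A_succ hk).trans_le ((A.strictMono (by omega) _).monotone hf)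
  obtain hec | rfl := (h.level_le_of_lt_A_iterate (by omega) hjk hd).lt_or_eq
  · have hd' : d < (A e k)^[k - 1 + 1] 0 := by
      rw [Nat.sub_add_cancel (by omega), ← A.succ_zero]; exact h.lt_A_succ_zero (by omega)
    have hbce : baseChange k e < baseChange k c :=
      hmono (by have := h.level_lt hk; simp only [Set.mem_Iio]; omega) hcN hec
    calc baseChange k d < (A (baseChange k e) (k + 1))^[k - 1 + 2] 0 := hstep hd' (by omega)
      _ = A (baseChange k e + 1) (k + 1) 0 := by rw [A.succ_zero]; congr 1; omega
      _ ≤ A (baseChange k c) (k + 1) 0 := A.mono (by omega) hbce le_rfl le_rfl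
      _ ≤ (A (baseChange k c) (k + 1))^[j + 1] 0 := by
        rw [Function.iterate_succ_apply']
        exact (A.strictMono (by omega) _).monotone (Nat.zero_le _)
  · obtain ⟨j', rfl⟩ : ∃ j', j = j' + 1 :=
      Nat.exists_eq_add_one_of_ne_zero (by rintro rfl; simp at hd)
    exact hstep hd (by omega)

theorem IsNF.baseChange_lt_A_succ_zero_of_strictMonoOn (hk : 2 ≤ k)
    (hmono : StrictMonoOn (baseChange k) (Set.Iio N)) (h : IsNF k m a b l) (hm : m < N) :
    baseChange k m < A (baseChange k a + 1) (k + 1) 0 := by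
  rw [A.succ_zero]
  refine baseChange_lt_A_iterate_of_strictMonoOn hk hmono m hm
    (by have := h.level_lt hk; omega) le_rfl ?_
  rw [← A.succ_zero]
  exact h.lt_A_succ_zero (by omega)

theorem baseChange_lt_of_strictMonoOn (hk : 2 ≤ k)
    (hmono : StrictMonoOn (baseChange k) (Set.Iio N)) {m : ℕ} (hm : m < N) :
    baseChange k m < baseChange k N := by
  obtain rfl | hm0 := Nat.eq_zero_or_pos m
  · simpa using hm.trans_le (le_baseChange hk N)
  obtain ⟨a, b, l, h⟩ : ∃ a b l, IsNF k m a b l := ⟨_, _, _, isNF_of_pos hk hm0⟩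
  obtain ⟨e, f, j, hN⟩ : ∃ e f j, IsNF k N e f j := ⟨_, _, _, isNF_of_pos hk (by omega)⟩
  have hlt {x : ℕ} (hx : x < m) : x ∈ Set.Iio N := hx.trans hm
  rw [hN.baseChange_eq hk]
  rcases h.lex hN hm with hae | ⟨rfl, hbf⟩ | ⟨rfl, rfl, hlj⟩
  · calc baseChange k m < A (baseChange k a + 1) (k + 1) 0 :=
          h.baseChange_lt_A_succ_zero_of_strictMonoOn hk hmono hm
      _ ≤ A (baseChange k e) (k + 1) (baseChange k f) :=
          A.mono (by omega) (hmono (hlt (h.level_lt hk)) (hN.level_lt hk) hae) le_rfl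
            (Nat.zero_le _)
      _ ≤ _ := Nat.le_add_right _ _
  · calc baseChange k m < A (baseChange k a) (k + 1) (baseChange k b + 1) :=
          h.baseChange_lt_A_succ hk
      _ ≤ A (baseChange k a) (k + 1) (baseChange k f) := (A.strictMono (by omega) _).monotone
          (hmono (hlt (h.arg_lt (by omega))) (hN.arg_lt (by omega)) hbf)
      _ ≤ _ := Nat.le_add_right _ _
  · rw [h.baseChange_eq hk]; omega

theorem baseChange_strictMono (hk : 2 ≤ k) : StrictMono (baseChange k) := by
  have hIio (N : ℕ) : StrictMonoOn (baseChange k) (Set.Iio N) := by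
    induction N with
    | zero => simp [StrictMonoOn]
    | succ N ih =>
      intro m hm n hn hmn
      obtain hnN | rfl := (Nat.lt_succ_iff.1 hn).lt_or_eq
      · exact ih (hmn.trans hnN) hnN hmn
      · exact baseChange_lt_of_strictMonoOn hk ih hmn
  exact fun m n hmn => hIio (n + 1) (by simp; omega) (by simp) hmn

theorem IsNF.baseChange (hk : 2 ≤ k) (h : IsNF k m a b l) :
    IsNF (k + 1) (baseChange k m) (baseChange k a) (baseChange k b) l :=
  (isNF_iff (by omega)).2 ⟨h.baseChange_eq hk,
    h.baseChange_lt_A_succ_zero_of_strictMonoOn hk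
      ((baseChange_strictMono hk).strictMonoOn _) (Nat.lt_add_one m),
    h.baseChange_lt_A_succ hk⟩

theorem BC.eq_baseChange (hk : 2 ≤ k) {m' : ℕ} (h : BC k m m') : m' = baseChange k m := by
  induction h with
  | zero => simp
  | step h _ _ iha ihb => rw [h.baseChange_eq hk, iha, ihb]

end BaseChange

open Ordinal

noncomputable def toOrdinal (k : ℕ) : ℕ → Ordinal.{0}
  | 0 => 0
  | m + 1 =>
    veblen (toOrdinal k (nfLevel k (m + 1))) (toOrdinal k (nfArg k (m + 1))) + nfRem k (m + 1)
  decreasing_by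
  · exact nfLevel_lt m.succ_pos
  · exact nfArg_lt m.succ_pos

section ToOrdinal

variable {k m a b l : ℕ}

@[simp] theorem toOrdinal_zero (k : ℕ) : toOrdinal k 0 = 0 := by rw [toOrdinal]

theorem IsNF.toOrdinal_eq (hk : 2 ≤ k) (h : IsNF k m a b l) :
    toOrdinal k m = veblen (toOrdinal k a) (toOrdinal k b) + l := by
  obtain ⟨m, rfl⟩ := Nat.exists_eq_add_one_of_ne_zero (h.pos (by omega)).ne'
  obtain ⟨ha, hb, hl⟩ := h.nf_eq hk
  rw [toOrdinal, ha, hb, hl]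

theorem toOrdinal_strictMono (hk : 2 ≤ k) : StrictMono (toOrdinal k) := by
  intro m n
  induction n using Nat.strong_induction_on generalizing m with
  | _ n ihn =>
  induction m using Nat.strong_induction_on with
  | _ m ihm =>
  intro hmn
  obtain ⟨e, f, j, hn⟩ : ∃ e f j, IsNF k n e f j := ⟨_, _, _, isNF_of_pos hk (by omega)⟩
  rw [hn.toOrdinal_eq hk]
  obtain rfl | hm0 := Nat.eq_zero_or_pos m
  · rw [toOrdinal_zero]
    exact veblen_pos.trans_le le_self_add
  obtain ⟨a, b, l, h⟩ : ∃ a b l, IsNF k m a b l := ⟨_, _, _, isNF_of_pos hk hm0⟩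
  rw [h.toOrdinal_eq hk]
  refine veblen_add_natCast_lt_veblen_add_natCast ?_
  rcases h.lex hn hmn with hae | ⟨rfl, hbf⟩ | ⟨rfl, rfl, hlj⟩
  · refine Or.inl ⟨ihn e (hn.level_lt hk) hae, ?_⟩
    have hA : toOrdinal k (A e k f) = veblen (toOrdinal k e) (toOrdinal k f) := by
      simpa using (hn.isNF_A (by omega)).toOrdinal_eq hk
    have hb : b < A e k f := calc
      b < m := h.arg_lt (by omega)
      _ < A (a + 1) k 0 := h.lt_A_succ_zero (by omega)
      _ ≤ A e k f := A.mono (by omega) hae le_rfl (Nat.zero_le f)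
    rw [← hA]
    obtain hAn | hAn := (show A e k f ≤ n by have := hn.1; omega).lt_or_eq
    · exact ihn _ hAn hb
    · rw [hAn]; exact ihm b (h.arg_lt (by omega)) (by omega)
  · exact Or.inr (Or.inl ⟨rfl, ihn f (hn.arg_lt (by omega)) hbf⟩)
  · exact Or.inr (Or.inr ⟨rfl, rfl, hlj⟩)

theorem toOrdinal_baseChange (hk : 2 ≤ k) (m : ℕ) :
    toOrdinal (k + 1) (baseChange k m) = toOrdinal k m := by
  induction m using Nat.strong_induction_on with
  | _ m ih =>
  obtain rfl | hm := Nat.eq_zero_or_pos m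
  · simp
  have h := isNF_of_pos hk hm
  rw [(h.baseChange hk).toOrdinal_eq (by omega), h.toOrdinal_eq hk, ih _ (h.level_lt hk),
    ih _ (h.arg_lt (by omega))]

end ToOrdinal

theorem toOrdinal_baseChange_sub_one_lt {k m : ℕ} (hk : 2 ≤ k) (hm : 0 < m) :
    toOrdinal (k + 1) (baseChange k m - 1) < toOrdinal k m := by
  rw [← toOrdinal_baseChange hk m]
  exact toOrdinal_strictMono (by omega) (Nat.sub_lt (hm.trans_le (le_baseChange hk m)) one_pos)

theorem goodstein_terminates_general (g : ℕ → ℕ)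
    (hstep : ∀ l, (g l = 0 → g (l + 1) = 0) ∧
      (0 < g l → ∃ m', BC (l + 3) (g l) m' ∧ g (l + 1) = m' - 1)) :
    ∃ l, g l = 0 := by
  by_contra! hg
  have hanti : StrictAnti fun l => toOrdinal (l + 3) (g l) := by
    refine strictAnti_nat_of_succ_lt fun l => ?_
    have hpos := Nat.pos_of_ne_zero (hg l)
    obtain ⟨m', hBC, hgl⟩ := (hstep l).2 hpos
    rw [hgl, hBC.eq_baseChange (by omega)]
    exact toOrdinal_baseChange_sub_one_lt (by omega) hpos
  exact not_strictAnti_of_wellFoundedLT _ hanti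

/-- The Goodstein process `m_0 = m`, `m_{l+1} = m_l[l+3←l+4] - 1` (and
`m_{l+1} = 0` once `m_l = 0`) always terminates. -/
theorem goodstein_terminates (m : ℕ) (g : ℕ → ℕ) (h0 : g 0 = m)
    (hstep : ∀ l, (g l = 0 → g (l + 1) = 0) ∧
      (0 < g l → ∃ m', BC (l + 3) (g l) m' ∧ g (l + 1) = m' - 1)) :
    ∃ l, g l = 0 :=
  goodstein_terminates_general g hstep
end
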